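/- Let t ≥ 1 and (a_1,b_1),...,(a_t,b_t) be pairs of positive integers. Let α be a positive irrational number, δ = 1/∏_{i=1}^t (a_i + b_i), and A = {a ∈ ℕ : ‖αa‖ < δ/2}. Then for every s ≤ t and every x ∈ ◯_{j=1}^s Γ_{a_j,b_j}(A) one has ‖αx‖ < (1/2)·∏_{i=s+1}^t 1/(a_i+b_i). -/
import Mathlib


/-- The linear operation `Γ_{a,b}(X) = aX + bX = {a x + b x' : x, x' ∈ X}`. -/
def Gamma (a b : ℤ) (X : Set ℤ) : Set ℤ :=
  {z | ∃ x ∈ X, ∃ y ∈ X, z = a * x + b * y}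

/-- The `s`-fold composition `◯_{j=1}^s Γ_{a_j,b_j}(X)` (0-indexed). -/
def iterComp (a b : ℕ → ℤ) : ℕ → Set ℤ → Set ℤ
  | 0, X => X
  | s + 1, X => Gamma (a s) (b s) (iterComp a b s X)

theorem iterates_of_bohr_set_small_norm (t : ℕ) (ht : 1 ≤ t) (a b : ℕ → ℤ)
    (hab : ∀ i < t, 0 < a i ∧ 0 < b i)
    (α : ℝ) (hαpos : 0 < α) (hα : Irrational α)
    (δ : ℝ) (hδ : δ = 1 / ∏ i ∈ Finset.range t, ((a i + b i : ℤ) : ℝ)) :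
    ∀ s ≤ t, ∀ x ∈ iterComp a b s {z : ℤ | 0 ≤ z ∧ |α * z - round (α * z)| < δ / 2},
      |α * x - round (α * x)| <
        (1 / 2) * ∏ i ∈ Finset.Ico s t, (1 / ((a i + b i : ℤ) : ℝ)) := by
  intro s
  induction s with
  | zero =>
    intro _ x hx
    have h := hx.2
    rw [hδ] at h
    calc |α * x - round (α * x)|
        < (1 / ∏ i ∈ Finset.range t, ((a i + b i : ℤ) : ℝ)) / 2 := h
      _ = (1 / 2) * ∏ i ∈ Finset.Ico 0 t, (1 / ((a i + b i : ℤ) : ℝ)) := by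
          rw [← Finset.range_eq_Ico]
          simp only [one_div, ← Finset.prod_inv_distrib]
          ring
  | succ s ih =>
    intro hst x hx
    have hs : s < t := hst
    obtain ⟨x₁, hx₁, x₂, hx₂, rfl⟩ := hx
    have h1 := ih (le_of_lt hs) x₁ hx₁
    have h2 := ih (le_of_lt hs) x₂ hx₂
    have ha : (0:ℝ) < (a s : ℝ) := by exact_mod_cast (hab s hs).1
    have hb : (0:ℝ) < (b s : ℝ) := by exact_mod_cast (hab s hs).2
    set B := (1/2) * ∏ i ∈ Finset.Ico s t, (1 / ((a i + b i : ℤ) : ℝ)) with hB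
    have key : |α * ((a s * x₁ + b s * x₂ : ℤ) : ℝ) -
        ((a s * round (α * x₁) + b s * round (α * x₂) : ℤ) : ℝ)|
        < ((a s : ℝ) + (b s : ℝ)) * B := by
      have heq : α * ((a s * x₁ + b s * x₂ : ℤ) : ℝ) -
          ((a s * round (α * x₁) + b s * round (α * x₂) : ℤ) : ℝ)
          = (a s : ℝ) * (α * x₁ - round (α * x₁)) +
            (b s : ℝ) * (α * x₂ - round (α * x₂)) := by
        push_cast; ring
      rw [heq]
      calc |(a s : ℝ) * (α * x₁ - round (α * x₁)) + (b s : ℝ) * (α * x₂ - round (α * x₂))|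
          ≤ |(a s : ℝ) * (α * x₁ - round (α * x₁))| +
            |(b s : ℝ) * (α * x₂ - round (α * x₂))| := abs_add_le _ _
        _ = (a s : ℝ) * |α * x₁ - round (α * x₁)| +
            (b s : ℝ) * |α * x₂ - round (α * x₂)| := by
            rw [abs_mul, abs_mul, abs_of_pos ha, abs_of_pos hb]
        _ < (a s : ℝ) * B + (b s : ℝ) * B := by
            exact add_lt_add (by exact mul_lt_mul_of_pos_left h1 ha)
              (by exact mul_lt_mul_of_pos_left h2 hb)
        _ = ((a s : ℝ) + (b s : ℝ)) * B := by ring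
    have hround := round_le (α * ((a s * x₁ + b s * x₂ : ℤ) : ℝ))
      (a s * round (α * x₁) + b s * round (α * x₂))
    have hfin : ((a s : ℝ) + (b s : ℝ)) * B =
        (1 / 2) * ∏ i ∈ Finset.Ico (s + 1) t, (1 / ((a i + b i : ℤ) : ℝ)) := by
      rw [hB, Finset.prod_eq_prod_Ico_succ_bot hs (fun i => (1 / ((a i + b i : ℤ) : ℝ)))]
      have hc : ((a s : ℝ) + (b s : ℝ)) ≠ 0 := by positivity
      push_cast
      rw [show ((a s : ℝ) + (b s : ℝ)) *
          (1 / 2 * (1 / ((a s : ℝ) + (b s : ℝ)) *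
            ∏ i ∈ Finset.Ico (s + 1) t, (1 / ((a i : ℝ) + (b i : ℝ))))) =
          (((a s : ℝ) + (b s : ℝ)) * (1 / ((a s : ℝ) + (b s : ℝ)))) *
            (1 / 2 * ∏ i ∈ Finset.Ico (s + 1) t, (1 / ((a i : ℝ) + (b i : ℝ)))) from by
        ring, mul_one_div_cancel hc, one_mul]
    calc |α * ((a s * x₁ + b s * x₂ : ℤ) : ℝ) -
          round (α * ((a s * x₁ + b s * x₂ : ℤ) : ℝ))|
        ≤ _ := hround
      _ < ((a s : ℝ) + (b s : ℝ)) * B := key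
      _ = _ := hfin
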